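/- (Target model error with only online access, under observational reachability; Lemma mle_target_online of the paper.) Let S be a finite state space, 𝒜 a finite action set, H ∈ ℕ, d₀ an initial distribution on S, d ∈ ℕ, and K ∈ ℕ. Let P_1,…,P_K and P_target be transition models that are low rank with a shared feature: P_{k;h}(s'|s,a) = ⟨φ*_h(s,a), μ*_{k;h}(s')⟩ and P_{target;h}(s'|s,a) = ⟨φ*_h(s,a), μ*_{target;h}(s')⟩. Assume the point-wise linear span condition: for every h and s' there are reals α_{k;h}(s') with μ*_{target;h}(s') = Σ_{k=1}^K α_{k;h}(s') μ*_{k;h}(s') and |α_{k;h}(s')| ≤ α_max. Assume there are policies π_1,…,π_K, λ_min > 0, and ψ_raw > 0 such that for every k and every h: (i) λ_min( Σ_{(s,a)} d^{π_k}_{P_k;h}(s,a) φ*_h(s,a)φ*_h(s,a)ᵀ ) ≥ λ_min, and (ii) d^{π_k}_{P_k;h}(s,a) ≥ ψ_raw · λ_min( Σ_{(s',a')} d^{π_k}_{P_k;h}(s',a') φ*_h(s',a')φ*_h(s',a')ᵀ ) for all (s,a). Let φ̂_h : S×𝒜 → ℝ^d and μ̂_{k;h} : S → ℝ^d be arbitrary,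 define err_{k;h}(s,a) := Σ_{s'} |⟨φ̂_h(s,a), μ̂_{k;h}(s')⟩ − ⟨φ*_h(s,a), μ*_{k;h}(s')⟩|, and suppose the on-policy MLE guarantee: for every h ∈ {0,…,H−1}, Σ_{k=1}^K E_{(s,a)∼d^{π_k}_{P_k;h}}[ err_{k;h}(s,a)² ] ≤ ζ for some ζ ≥ 0. Define μ̃_h(s') := Σ_{k=1}^K α_{k;h}(s') μ̂_{k;h}(s'). Then for every h ∈ {0,…,H−1} and every policy π: Σ_{(s,a)} d^π_{P_target;h}(s,a) · Σ_{s'} |⟨φ̂_h(s,a), μ̃_h(s')⟩ − P_{target;h}(s'|s,a)| ≤ α_max · √( K · ζ / (ψ_raw · λ_min) ). -/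

import Mathlib

/-!
Reachability and coverage together say that every state-action pair has occupancy at least
`c = ψ_raw λ_min` under each exploratory policy `π_k` in its source model `P_k`, whereas any
occupancy is at most `1`. Hence the expectation of a nonnegative function under any target
occupancy `d^π_{P_target;h}` is at most `1/c` times its expectation under `d^{π_k}_{P_k;h}`.

Pointwise, the span condition writes the error of `⟨φ̂, μ̃⟩` as an `α`-combination of the
per-task errors, so it is at most `α_max Σ_k err_k`. Jensen moves each `E[err_k]` under a
square root, the change of measure bounds `E_{target}[err_k²] ≤ E_k[err_k²] / c`, and
Cauchy–Schwarz over the `K` tasks turns `Σ_k √x_k` into `√(K Σ_k x_k) ≤ √(K ζ / c)`.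
-/

noncomputable section

open Finset

/-- `p` is a probability distribution on the finite type `X`. -/
def IsDist {X : Type*} [Fintype X] (p : X → ℝ) : Prop :=
  (∀ x, 0 ≤ p x) ∧ (∑ x, p x) = 1

variable {S Act : Type*} [Fintype S] [Fintype Act]

/-- Occupancy measure `d^π_{P;h}(s,a)`: the probability that, executing the policy `π`
in the transition model `P` starting from `d0`, the state-action pair at step `h`
is `(s,a)`. -/
def occ (d0 : S → ℝ) (π : ℕ → S → Act → ℝ) (P : ℕ → S → Act → S → ℝ) :
    ℕ → S → Act → ℝ
  | 0 => fun s a => d0 s * π 0 s a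
  | h + 1 => fun s' a' => (∑ s, ∑ a, occ d0 π P h s a * P h s a s') * π (h + 1) s' a'

open Matrix

/-- The smallest eigenvalue of a symmetric matrix, expressed as the minimum of the
Rayleigh quotient `vᵀ M v` over unit vectors `v`. -/
noncomputable def lamMin {d : ℕ} (M : Matrix (Fin d) (Fin d) ℝ) : ℝ :=
  sInf {x | ∃ v : Fin d → ℝ, (∑ i, v i ^ 2) = 1 ∧ x = v ⬝ᵥ M.mulVec v}

namespace IsDist

variable {X : Type*} [Fintype X] {p : X → ℝ}

lemma nonempty (hp : IsDist p) : Nonempty X := by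
  obtain ⟨x, -, -⟩ := exists_ne_zero_of_sum_ne_zero (hp.2 ▸ one_ne_zero : ∑ x, p x ≠ 0)
  exact ⟨x⟩

lemma le_one (hp : IsDist p) (x : X) : p x ≤ 1 :=
  hp.2 ▸ single_le_sum (fun y _ => hp.1 y) (mem_univ x)

lemma sq_sum_mul_le_sum_mul_sq (hp : IsDist p) (f : X → ℝ) :
    (∑ x, p x * f x) ^ 2 ≤ ∑ x, p x * f x ^ 2 := by
  have hsq (x : X) : (p x * f x) ^ 2 = p x * (p x * f x ^ 2) := by ring
  simpa [hp.2] using sum_sq_le_sum_mul_sum_of_sq_le_mul univ (fun x _ => hp.1 x)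
    (fun x _ => mul_nonneg (hp.1 x) (sq_nonneg (f x))) (fun x _ => (hsq x).le)

lemma sum_mul_le_sqrt_of_le_weight (hp : IsDist p) {q : X → ℝ} {c : ℝ} (hc : 0 < c)
    (hq : ∀ x, c ≤ q x) (f : X → ℝ) :
    ∑ x, p x * f x ≤ √((∑ x, q x * f x ^ 2) / c) := by
  have hpq : ∀ x, p x ≤ q x / c := fun x =>
    (hp.le_one x).trans ((one_le_div hc).2 (hq x))
  calc ∑ x, p x * f x ≤ √(∑ x, p x * f x ^ 2) :=
        Real.le_sqrt_of_sq_le (hp.sq_sum_mul_le_sum_mul_sq f)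
    _ ≤ √(∑ x, q x / c * f x ^ 2) :=
        Real.sqrt_le_sqrt (sum_le_sum fun x _ => by gcongr; exact hpq x)
    _ = √((∑ x, q x * f x ^ 2) / c) := by
        rw [sum_div]; congr 1; exact sum_congr rfl fun x _ => by ring

end IsDist

lemma Real.sum_sqrt_le_sqrt_card_mul_sum {ι : Type*} (s : Finset ι) {f : ι → ℝ}
    (hf : ∀ i ∈ s, 0 ≤ f i) : ∑ i ∈ s, √(f i) ≤ √(#s * ∑ i ∈ s, f i) := by
  refine Real.le_sqrt_of_sq_le ((sq_sum_le_card_mul_sum_sq (s := s)).trans_eq ?_)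
  rw [sum_congr rfl fun i hi => Real.sq_sqrt (hf i hi)]

section Occupancy

variable {d0 : S → ℝ} {π : ℕ → S → Act → ℝ} {P : ℕ → S → Act → S → ℝ}

lemma occ_nonneg (hd0 : IsDist d0) (hπ : ∀ t s, IsDist (π t s))
    (hP : ∀ h s a, IsDist (P h s a)) (h : ℕ) (s : S) (a : Act) :
    0 ≤ occ d0 π P h s a := by
  induction h generalizing s a with
  | zero => exact mul_nonneg (hd0.1 s) ((hπ 0 s).1 a)
  | succ n ih =>
    exact mul_nonneg (sum_nonneg fun s _ => sum_nonneg fun a _ =>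
      mul_nonneg (ih s a) ((hP n s a).1 _)) ((hπ (n + 1) s).1 a)

lemma sum_occ (hd0 : IsDist d0) (hπ : ∀ t s, IsDist (π t s))
    (hP : ∀ h s a, IsDist (P h s a)) (h : ℕ) :
    ∑ s, ∑ a, occ d0 π P h s a = 1 := by
  induction h with
  | zero => simp only [occ, ← mul_sum, (hπ 0 _).2, mul_one, hd0.2]
  | succ n ih =>
    calc ∑ s', ∑ a', occ d0 π P (n + 1) s' a'
        = ∑ s', ∑ s, ∑ a, occ d0 π P n s a * P n s a s' := by
          simp only [occ, ← mul_sum, (hπ (n + 1) _).2, mul_one]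
      _ = ∑ s, ∑ a, occ d0 π P n s a := by
          rw [sum_comm]
          refine sum_congr rfl fun s _ => ?_
          rw [sum_comm]
          simp only [← mul_sum, (hP n s _).2, mul_one]
      _ = 1 := ih

lemma isDist_occ (hd0 : IsDist d0) (hπ : ∀ t s, IsDist (π t s))
    (hP : ∀ h s a, IsDist (P h s a)) (h : ℕ) :
    IsDist fun x : S × Act => occ d0 π P h x.1 x.2 :=
  ⟨fun x => occ_nonneg hd0 hπ hP h x.1 x.2, by
    rw [Fintype.sum_prod_type']; exact sum_occ hd0 hπ hP h⟩

end Occupancy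

lemma sum_abs_dot_combination_sub_le {ι κ Y : Type*}
    [Fintype ι] [Fintype κ] [Fintype Y] (u v : ι → ℝ)
    (μhat μstar : κ → Y → ι → ℝ) (α : κ → Y → ℝ) {αmax : ℝ}
    (hα : ∀ k y, |α k y| ≤ αmax) :
    ∑ y, |(∑ i, u i * ∑ k, α k y * μhat k y i) - ∑ i, v i * ∑ k, α k y * μstar k y i|
      ≤ αmax * ∑ k, ∑ y, |(∑ i, u i * μhat k y i) - ∑ i, v i * μstar k y i| := by
  have hcomb (y : Y) :
      (∑ i, u i * ∑ k, α k y * μhat k y i) - ∑ i, v i * ∑ k, α k y * μstar k y i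
        = ∑ k, α k y * ((∑ i, u i * μhat k y i) - ∑ i, v i * μstar k y i) := by
    simp only [mul_sub, mul_sum, ← sum_sub_distrib]
    rw [sum_comm]
    exact sum_congr rfl fun k _ => sum_congr rfl fun i _ => by ring
  calc _ ≤ ∑ y, ∑ k, αmax * |(∑ i, u i * μhat k y i) - ∑ i, v i * μstar k y i| := by
        refine sum_le_sum fun y _ => ?_
        rw [hcomb]
        refine (abs_sum_le_sum_abs _ _).trans (sum_le_sum fun k _ => ?_)
        rw [abs_mul]
        exact mul_le_mul_of_nonneg_right (hα k y) (abs_nonneg _)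
    _ = _ := by rw [sum_comm, mul_sum]; simp only [mul_sum]

theorem target_model_error_online_general
    (H d K : ℕ)
    (d0 : S → ℝ) (hd0 : IsDist d0)
    (Pk : Fin K → ℕ → S → Act → S → ℝ)
    (Pt : ℕ → S → Act → S → ℝ) (hPt : ∀ h s a, IsDist (Pt h s a))
    (φstar : ℕ → S → Act → Fin d → ℝ)
    (μstar : Fin K → ℕ → S → Fin d → ℝ) (μstarT : ℕ → S → Fin d → ℝ)
    (hlowt : ∀ h s a s', Pt h s a s' = ∑ i, φstar h s a i * μstarT h s' i)
    (α : Fin K → ℕ → S → ℝ) (αmax : ℝ)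
    (hspan : ∀ h s' i, μstarT h s' i = ∑ k, α k h s' * μstar k h s' i)
    (hαmax : ∀ k h s', |α k h s'| ≤ αmax)
    (πk : Fin K → ℕ → S → Act → ℝ)
    (lmin : ℝ) (hlmin : 0 < lmin) (ψraw : ℝ) (hψraw : 0 < ψraw)
    (hcov : ∀ k h, h < H →
      lmin ≤ lamMin (∑ s, ∑ a, occ d0 (πk k) (Pk k) h s a •
        vecMulVec (φstar h s a) (φstar h s a)))
    (hreach : ∀ k h, h < H → ∀ s a,
      ψraw * lamMin (∑ s', ∑ a', occ d0 (πk k) (Pk k) h s' a' •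
          vecMulVec (φstar h s' a') (φstar h s' a'))
        ≤ occ d0 (πk k) (Pk k) h s a)
    (φhat : ℕ → S → Act → Fin d → ℝ) (μhat : Fin K → ℕ → S → Fin d → ℝ)
    (ζ : ℝ)
    (hmle : ∀ h, h < H →
      ∑ k, ∑ s, ∑ a, occ d0 (πk k) (Pk k) h s a *
          (∑ s', |(∑ i, φhat h s a i * μhat k h s' i)
                  - (∑ i, φstar h s a i * μstar k h s' i)|) ^ 2
        ≤ ζ) :
    ∀ h, h < H → ∀ (π : ℕ → S → Act → ℝ), (∀ t s, IsDist (π t s)) →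
      ∑ s, ∑ a, occ d0 π Pt h s a *
          (∑ s', |(∑ i, φhat h s a i * (∑ k, α k h s' * μhat k h s' i)) - Pt h s a s'|)
        ≤ αmax * Real.sqrt ((K : ℝ) * ζ / (ψraw * lmin)) := by
  intro h hh π hπ
  obtain rfl | hK := Nat.eq_zero_or_pos K
  · simp [hlowt, hspan]
  obtain ⟨s₀⟩ := hd0.nonempty
  have hαmax₀ : 0 ≤ αmax := (abs_nonneg _).trans (hαmax ⟨0, hK⟩ h s₀)
  set c := ψraw * lmin
  have hc : 0 < c := mul_pos hψraw hlmin
  have hfloor : ∀ k s a, c ≤ occ d0 (πk k) (Pk k) h s a := fun k s a =>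
    (mul_le_mul_of_nonneg_left (hcov k h hh) hψraw.le).trans (hreach k h hh s a)
  set err : Fin K → S → Act → ℝ := fun k s a =>
    ∑ s', |(∑ i, φhat h s a i * μhat k h s' i) - ∑ i, φstar h s a i * μstar k h s' i|
  set L : Fin K → ℝ := fun k => ∑ s, ∑ a, occ d0 (πk k) (Pk k) h s a * err k s a ^ 2
  have hL : ∀ k, 0 ≤ L k / c := fun k => div_nonneg (sum_nonneg fun s _ => sum_nonneg
    fun a _ => mul_nonneg (hc.le.trans (hfloor k s a)) (sq_nonneg _)) hc.le
  calc _ ≤ ∑ s, ∑ a, occ d0 π Pt h s a * (αmax * ∑ k, err k s a) := by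
        simp only [hlowt, hspan]
        gcongr with s _ a _
        · exact occ_nonneg hd0 hπ hPt h s a
        · exact sum_abs_dot_combination_sub_le _ _ _ _ (fun k y => α k h y) (hαmax · h)
    _ = αmax * ∑ k, ∑ s, ∑ a, occ d0 π Pt h s a * err k s a := by
        simp only [mul_sum, sum_comm (γ := Fin K)]
        exact sum_congr rfl fun _ _ => sum_congr rfl fun _ _ => sum_congr rfl fun _ _ => by ring
    _ ≤ αmax * ∑ k, √(L k / c) := by
        gcongr with k
        simpa only [Fintype.sum_prod_type] using
          (isDist_occ hd0 hπ hPt h).sum_mul_le_sqrt_of_le_weight hc (fun x => hfloor k x.1 x.2)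
            (fun x => err k x.1 x.2)
    _ ≤ αmax * √(K * ((∑ k, L k) / c)) := by
        gcongr
        simpa [sum_div] using Real.sum_sqrt_le_sqrt_card_mul_sum univ fun k _ => hL k
    _ ≤ αmax * √(K * ζ / c) := by
        rw [mul_div_assoc]
        gcongr
        exact hmle h hh

/-- **Target model error with only online access, under observational reachability.**
Under the shared-feature low-rank structure, the point-wise linear span condition,
feature coverage `λ_min(cov_k(h)) ≥ λmin`, observational reachability
`d^{π_k}_{P_k;h}(s,a) ≥ ψ_raw · λ_min(cov_k(h))`, and the on-policy MLE guarantee,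
the expected TV error of the transferred model `⟨φ̂_h, μ̃_h⟩` in the target task
at every step `h < H` and under every policy is at most `αmax √(K ζ / (ψ_raw λmin))`. -/
theorem target_model_error_online
    (H d K : ℕ)
    (d0 : S → ℝ) (hd0 : IsDist d0)
    (Pk : Fin K → ℕ → S → Act → S → ℝ) (hPk : ∀ k h s a, IsDist (Pk k h s a))
    (Pt : ℕ → S → Act → S → ℝ) (hPt : ∀ h s a, IsDist (Pt h s a))
    (φstar : ℕ → S → Act → Fin d → ℝ)
    (μstar : Fin K → ℕ → S → Fin d → ℝ) (μstarT : ℕ → S → Fin d → ℝ)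
    (hlowk : ∀ k h s a s', Pk k h s a s' = ∑ i, φstar h s a i * μstar k h s' i)
    (hlowt : ∀ h s a s', Pt h s a s' = ∑ i, φstar h s a i * μstarT h s' i)
    (α : Fin K → ℕ → S → ℝ) (αmax : ℝ)
    (hspan : ∀ h s' i, μstarT h s' i = ∑ k, α k h s' * μstar k h s' i)
    (hαmax : ∀ k h s', |α k h s'| ≤ αmax)
    (πk : Fin K → ℕ → S → Act → ℝ) (hπk : ∀ k h s, IsDist (πk k h s))
    (lmin : ℝ) (hlmin : 0 < lmin) (ψraw : ℝ) (hψraw : 0 < ψraw)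
    (hcov : ∀ k h, h < H →
      lmin ≤ lamMin (∑ s, ∑ a, occ d0 (πk k) (Pk k) h s a •
        vecMulVec (φstar h s a) (φstar h s a)))
    (hreach : ∀ k h, h < H → ∀ s a,
      ψraw * lamMin (∑ s', ∑ a', occ d0 (πk k) (Pk k) h s' a' •
          vecMulVec (φstar h s' a') (φstar h s' a'))
        ≤ occ d0 (πk k) (Pk k) h s a)
    (φhat : ℕ → S → Act → Fin d → ℝ) (μhat : Fin K → ℕ → S → Fin d → ℝ)
    (ζ : ℝ) (hζ : 0 ≤ ζ)
    (hmle : ∀ h, h < H →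
      ∑ k, ∑ s, ∑ a, occ d0 (πk k) (Pk k) h s a *
          (∑ s', |(∑ i, φhat h s a i * μhat k h s' i)
                  - (∑ i, φstar h s a i * μstar k h s' i)|) ^ 2
        ≤ ζ) :
    ∀ h, h < H → ∀ (π : ℕ → S → Act → ℝ), (∀ t s, IsDist (π t s)) →
      ∑ s, ∑ a, occ d0 π Pt h s a *
          (∑ s', |(∑ i, φhat h s a i * (∑ k, α k h s' * μhat k h s' i)) - Pt h s a s'|)
        ≤ αmax * Real.sqrt ((K : ℝ) * ζ / (ψraw * lmin)) :=
  target_model_error_online_general H d K d0 hd0 Pk Pt hPt φstar μstar μstarT hlowt α αmax hspan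
    hαmax πk lmin hlmin ψraw hψraw hcov hreach φhat μhat ζ hmle
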